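/- The set of m×m real symmetric positive definite matrices equipped with the operation ⊕ is a commutative group: for all SPD matrices X, Y, Z one has X ⊕ I = X, X ⊕ X⁻¹ = I, X ⊕ Y = Y ⊕ X, and (X ⊕ Y) ⊕ Z = X ⊕ (Y ⊕ Z), where I is the identity matrix and X⁻¹ the matrix inverse. -/

import Mathlib

open Matrix MeasureTheory

/-- Matrix logarithm of a real symmetric (positive definite) matrix, via the functional
calculus: for an orthogonal eigendecomposition `X = U diag(λ₁,…,λₘ) Uᵀ` this is
`U diag(log λ₁,…,log λₘ) Uᵀ`. -/
noncomputable def spdLog {m : ℕ} (X : Matrix (Fin m) (Fin m) ℝ) : Matrix (Fin m) (Fin m) ℝ :=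
  cfc Real.log X

/-- Real power of a real symmetric positive definite matrix, via the functional calculus:
for `X = U diag(λ₁,…,λₘ) Uᵀ` this is `U diag(λ₁^r,…,λₘ^r) Uᵀ`. -/
noncomputable def spdPow {m : ℕ} (X : Matrix (Fin m) (Fin m) ℝ) (r : ℝ) :
    Matrix (Fin m) (Fin m) ℝ :=
  cfc (fun x : ℝ => x ^ r) X

/-- The matrix exponential. -/
noncomputable def mExp {m : ℕ} (X : Matrix (Fin m) (Fin m) ℝ) : Matrix (Fin m) (Fin m) ℝ :=
  NormedSpace.exp X

/-- The SPD-space addition with base point `I`: `X ⊕ Y = exp (log X + log Y)`. -/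
noncomputable def oplus {m : ℕ} (X Y : Matrix (Fin m) (Fin m) ℝ) : Matrix (Fin m) (Fin m) ℝ :=
  mExp (spdLog X + spdLog Y)

/-- The SPD-space scalar multiplication with base point `I`: `r ⊙ X = exp (r · log X)`. -/
noncomputable def odot {m : ℕ} (r : ℝ) (X : Matrix (Fin m) (Fin m) ℝ) :
    Matrix (Fin m) (Fin m) ℝ :=
  mExp (r • spdLog X)

/-- The squared affine-invariant distance
`d(X₁,X₂)² = tr[(log (X₁^{-1/2} X₂ X₁^{-1/2}))²]` on SPD matrices. -/
noncomputable def d2 {m : ℕ} (X₁ X₂ : Matrix (Fin m) (Fin m) ℝ) : ℝ :=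
  ((spdLog (spdPow X₁ (-(1 : ℝ) / 2) * X₂ * spdPow X₁ (-(1 : ℝ) / 2))) ^ 2).trace

/-!
`log` is a bijection from SPD matrices onto symmetric matrices with inverse `exp`, and `⊕` is
addition of symmetric matrices transported along it; so the group laws of `⊕` are those of
matrix addition, the `⊕`-inverse `exp (-log X)` being `X⁻¹`.
-/

section
variable {m : ℕ}

open scoped Matrix.Norms.L2Operator MatrixOrder

lemma isSelfAdjoint_spdLog (X : Matrix (Fin m) (Fin m) ℝ) : IsSelfAdjoint (spdLog X) :=
  cfc_predicate _ X

lemma spdLog_one : spdLog (1 : Matrix (Fin m) (Fin m) ℝ) = 0 :=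
  CFC.log_one

lemma IsSelfAdjoint.spdLog_mExp {A : Matrix (Fin m) (Fin m) ℝ} (hA : IsSelfAdjoint A) :
    spdLog (mExp A) = A :=
  CFC.log_exp A hA

lemma Matrix.PosDef.mExp_spdLog {X : Matrix (Fin m) (Fin m) ℝ} (hX : X.PosDef) :
    mExp (spdLog X) = X :=
  CFC.exp_log X hX.isStrictlyPositive

lemma spdLog_oplus (X Y : Matrix (Fin m) (Fin m) ℝ) :
    spdLog (oplus X Y) = spdLog X + spdLog Y :=
  ((isSelfAdjoint_spdLog X).add (isSelfAdjoint_spdLog Y)).spdLog_mExp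

lemma Matrix.PosDef.spdLog_inv {X : Matrix (Fin m) (Fin m) ℝ} (hX : X.PosDef) :
    spdLog X⁻¹ = -spdLog X := by
  have hinv : X⁻¹ = mExp (-spdLog X) := by
    rw [mExp, Matrix.exp_neg, ← mExp, hX.mExp_spdLog]
  rw [hinv, (isSelfAdjoint_spdLog X).neg.spdLog_mExp]

end

theorem spd_oplus_comm_group_general {m : ℕ} (X Y Z : Matrix (Fin m) (Fin m) ℝ)
    (hX : X.PosDef) :
    oplus X 1 = X ∧ oplus X X⁻¹ = 1 ∧ oplus X Y = oplus Y X ∧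
      oplus (oplus X Y) Z = oplus X (oplus Y Z) := by
  refine ⟨?_, ?_, ?_, ?_⟩
  · rw [oplus, spdLog_one, add_zero, hX.mExp_spdLog]
  · rw [oplus, hX.spdLog_inv, add_neg_cancel, mExp, NormedSpace.exp_zero]
  · rw [oplus, oplus, add_comm]
  · rw [oplus, spdLog_oplus, oplus, spdLog_oplus, add_assoc]

/-- The SPD matrices with the operation `⊕` form a commutative group: the identity matrix is
a neutral element, the matrix inverse is the `⊕`-inverse, and `⊕` is commutative and
associative. -/
theorem spd_oplus_comm_group {m : ℕ} (X Y Z : Matrix (Fin m) (Fin m) ℝ)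
    (hX : X.PosDef) (hY : Y.PosDef) (hZ : Z.PosDef) :
    oplus X 1 = X ∧ oplus X X⁻¹ = 1 ∧ oplus X Y = oplus Y X ∧
      oplus (oplus X Y) Z = oplus X (oplus Y Z) :=
  spd_oplus_comm_group_general X Y Z hX
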